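/- arXiv:2501.13747 — 3 statements merged into one kernel-verified Lean document; each statement's English description precedes it below -/
import Mathlib

section
/- Let (⇀, ↼) be a matched pair of actions on a Hopf algebra H over a field k with antipode S, and let r be the associated Yang–Baxter operator. Then r∘r = id_{H⊗H} if and only if x ↼ y = S(x₁ ⇀ y) ⇀ x₂ for all x, y ∈ H. -/
/-!
Write `φ ⇀ χ` for the map `c ↦ φ(c₁) ⇀ χ(c₂)` on linear maps `H ⊗ H → H`; it is an action of
the convolution algebra, so for a coalgebra map `φ` the operator `φ ⇀ -` is invertible with
inverse `(S ∘ φ) ⇀ -`. Let `p₁ (x ⊗ y) = ε(y) x` and `p₂ (x ⊗ y) = ε(x) y`. Since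
`f ∘ r = f ⇀ g`, the condition on `g` says exactly that `f ∘ r = p₁`. On the other hand `r` is
comultiplicative (this is where `(x₁ ⇀ a₁) ⊗ (x₂ ↼ a₂) = (x₂ ⇀ a₂) ⊗ (x₁ ↼ a₁)` enters) and
`p₁ ∘ r = f`, so `r ∘ r = id` forces `f ∘ r = p₁`. Conversely, `f ∘ r = p₁` gives
`g ∘ r = (S ∘ p₁) ⇀ f = (S ∘ p₁) ⇀ (p₁ ⇀ p₂) = p₂`, hence
`r ∘ r = (f ∘ r ⊗ g ∘ r) ∘ Δ = (p₁ ⊗ p₂) ∘ Δ = id`.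
-/

open TensorProduct

noncomputable section

variable (k H : Type) [Field k] [Ring H] [HopfAlgebra k H]

/-- The map `x ⊗ y ↦ Σ (x₁ ⊗ y₁) ⊗ (x₂ ⊗ y₂)` (Sweedler notation). -/
def sweedler2 : H ⊗[k] H →ₗ[k] (H ⊗[k] H) ⊗[k] (H ⊗[k] H) :=
  (TensorProduct.tensorTensorTensorComm k H H H H).toLinearMap ∘ₗ
    TensorProduct.map Coalgebra.comul Coalgebra.comul

variable {k H}

/-- `f : H ⊗ H →ₗ H`, written `f (x ⊗ₜ y) = x ⇀ y`, is a left `H`-module coalgebra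
action of `H` on itself. -/
structure IsLeftModuleCoalgebraAction (f : H ⊗[k] H →ₗ[k] H) : Prop where
  /-- `x ⇀ (y ⇀ w) = (xy) ⇀ w` -/
  mul_act : f ∘ₗ TensorProduct.map LinearMap.id f ∘ₗ (TensorProduct.assoc k H H H).toLinearMap
    = f ∘ₗ TensorProduct.map (LinearMap.mul' k H) LinearMap.id
  /-- `1 ⇀ y = y` -/
  one_act : ∀ y : H, f ((1 : H) ⊗ₜ[k] y) = y
  /-- `Δ(x ⇀ y) = (x₁ ⇀ y₁) ⊗ (x₂ ⇀ y₂)` -/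
  comul_comp : Coalgebra.comul ∘ₗ f = TensorProduct.map f f ∘ₗ sweedler2 k H
  /-- `ε(x ⇀ y) = ε(x)ε(y)` -/
  counit_comp : Coalgebra.counit ∘ₗ f
    = (TensorProduct.lid k k).toLinearMap ∘ₗ
        TensorProduct.map Coalgebra.counit Coalgebra.counit

/-- `g : H ⊗ H →ₗ H`, written `g (x ⊗ₜ y) = x ↼ y`, is a right `H`-module coalgebra
action of `H` on itself. -/
structure IsRightModuleCoalgebraAction (g : H ⊗[k] H →ₗ[k] H) : Prop where
  /-- `(x ↼ y) ↼ w = x ↼ (yw)` -/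
  act_mul : g ∘ₗ TensorProduct.map g LinearMap.id
    = g ∘ₗ TensorProduct.map LinearMap.id (LinearMap.mul' k H) ∘ₗ
        (TensorProduct.assoc k H H H).toLinearMap
  /-- `x ↼ 1 = x` -/
  act_one : ∀ x : H, g (x ⊗ₜ[k] (1 : H)) = x
  /-- `Δ(x ↼ y) = (x₁ ↼ y₁) ⊗ (x₂ ↼ y₂)` -/
  comul_comp : Coalgebra.comul ∘ₗ g = TensorProduct.map g g ∘ₗ sweedler2 k H
  /-- `ε(x ↼ y) = ε(x)ε(y)` -/
  counit_comp : Coalgebra.counit ∘ₗ g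
    = (TensorProduct.lid k k).toLinearMap ∘ₗ
        TensorProduct.map Coalgebra.counit Coalgebra.counit

/-- `(f, g)` (written `f (x ⊗ₜ y) = x ⇀ y` and `g (x ⊗ₜ y) = x ↼ y`) is a matched pair
of actions on the Hopf algebra `H`. -/
structure IsMatchedPairOfActions (f g : H ⊗[k] H →ₗ[k] H) : Prop where
  left : IsLeftModuleCoalgebraAction f
  right : IsRightModuleCoalgebraAction g
  /-- `x ⇀ (ab) = (x₁ ⇀ a₁)((x₂ ↼ a₂) ⇀ b)` -/
  mp1 : f ∘ₗ TensorProduct.map LinearMap.id (LinearMap.mul' k H) ∘ₗ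
      (TensorProduct.assoc k H H H).toLinearMap
    = LinearMap.mul' k H ∘ₗ
        TensorProduct.map f (f ∘ₗ TensorProduct.map g LinearMap.id) ∘ₗ
        (TensorProduct.assoc k (H ⊗[k] H) (H ⊗[k] H) H).toLinearMap ∘ₗ
        TensorProduct.map (sweedler2 k H) LinearMap.id
  /-- `x ⇀ 1 = ε(x)1` -/
  mp2 : ∀ x : H, f (x ⊗ₜ[k] (1 : H)) = Coalgebra.counit (R := k) x • (1 : H)
  /-- `(xy) ↼ a = (x ↼ (y₁ ⇀ a₁))(y₂ ↼ a₂)` -/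
  mp3 : g ∘ₗ TensorProduct.map (LinearMap.mul' k H) LinearMap.id
    = LinearMap.mul' k H ∘ₗ
        TensorProduct.map (g ∘ₗ TensorProduct.map LinearMap.id f) g ∘ₗ
        (TensorProduct.assoc k H (H ⊗[k] H) (H ⊗[k] H)).symm.toLinearMap ∘ₗ
        TensorProduct.map LinearMap.id (sweedler2 k H) ∘ₗ
        (TensorProduct.assoc k H H H).toLinearMap
  /-- `1 ↼ a = ε(a)1` -/
  mp4 : ∀ a : H, g ((1 : H) ⊗ₜ[k] a) = Coalgebra.counit (R := k) a • (1 : H)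
  /-- `(x₁ ⇀ a₁) ⊗ (x₂ ↼ a₂) = (x₂ ⇀ a₂) ⊗ (x₁ ↼ a₁)` -/
  mp5 : TensorProduct.map f g ∘ₗ sweedler2 k H
    = TensorProduct.map f g ∘ₗ
        (TensorProduct.comm k (H ⊗[k] H) (H ⊗[k] H)).toLinearMap ∘ₗ sweedler2 k H
  /-- `xy = (x₁ ⇀ y₁)(x₂ ↼ y₂)` -/
  factor : LinearMap.mul' k H
    = LinearMap.mul' k H ∘ₗ TensorProduct.map f g ∘ₗ sweedler2 k H

variable (k H)

/-- The Yang–Baxter operator `r (x ⊗ₜ y) = (x₁ ⇀ y₁) ⊗ (x₂ ↼ y₂)` associated to a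
matched pair of actions. -/
def ybOp (f g : H ⊗[k] H →ₗ[k] H) : H ⊗[k] H →ₗ[k] H ⊗[k] H :=
  TensorProduct.map f g ∘ₗ sweedler2 k H

end
noncomputable section
variable {k H : Type} [Field k] [Ring H] [HopfAlgebra k H]

/-- The map `x ⊗ y ↦ Σ (x₁ ⊗ y) ⊗ x₂`. -/
def sweedlerLeft (k H : Type) [Field k] [Ring H] [HopfAlgebra k H] :
    H ⊗[k] H →ₗ[k] (H ⊗[k] H) ⊗[k] H :=
  (TensorProduct.assoc k H H H).symm.toLinearMap ∘ₗ
    TensorProduct.map LinearMap.id (TensorProduct.comm k H H).toLinearMap ∘ₗ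
    (TensorProduct.assoc k H H H).toLinearMap ∘ₗ
    TensorProduct.map Coalgebra.comul LinearMap.id

open Coalgebra WithConv

section TensorCoalgebra

variable {R A B C : Type*} [CommSemiring R] [AddCommMonoid A] [Module R A] [Coalgebra R A]
  [AddCommMonoid B] [Module R B] [Coalgebra R B] [AddCommMonoid C] [Module R C] [Coalgebra R C]

variable (R A B) in
def tensorFst : A ⊗[R] B →ₗc[R] A :=
  (Coalgebra.TensorProduct.rid R R A).toCoalgHom.comp
    (Coalgebra.TensorProduct.map (CoalgHom.id R A) (counitCoalgHom R B))

variable (R A B) in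
def tensorSnd : A ⊗[R] B →ₗc[R] B :=
  (Coalgebra.TensorProduct.lid R B).toCoalgHom.comp
    (Coalgebra.TensorProduct.map (counitCoalgHom R A) (CoalgHom.id R B))

lemma tensorFst_toLinearMap : (tensorFst R A B : A ⊗[R] B →ₗ[R] A) =
    (TensorProduct.rid R A).toLinearMap ∘ₗ map LinearMap.id counit := rfl

lemma tensorSnd_toLinearMap : (tensorSnd R A B : A ⊗[R] B →ₗ[R] B) =
    (TensorProduct.lid R B).toLinearMap ∘ₗ map counit LinearMap.id := rfl

lemma tensorFst_comp_map_comp_comul (f : C →ₗ[R] A) (g : C →ₗc[R] B) :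
    (tensorFst R A B : A ⊗[R] B →ₗ[R] A) ∘ₗ map f g ∘ₗ comul = f := by
  calc (tensorFst R A B : A ⊗[R] B →ₗ[R] A) ∘ₗ map f g ∘ₗ comul
      = (TensorProduct.rid R A).toLinearMap ∘ₗ
          map f (counit ∘ₗ (g : C →ₗ[R] B)) ∘ₗ comul := by
        simp only [tensorFst_toLinearMap, LinearMap.comp_assoc,
          ← LinearMap.comp_assoc _ _ (map LinearMap.id counit), ← TensorProduct.map_comp,
          LinearMap.id_comp]
    _ = f := by
        rw [CoalgHomClass.counit_comp, CoassocSimps.map_counit_comp_comul_right]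
        ext; simp

lemma tensorFst_comp_comul :
    (tensorFst R A A : A ⊗[R] A →ₗ[R] A) ∘ₗ comul = LinearMap.id := by
  simpa using tensorFst_comp_map_comp_comul LinearMap.id (CoalgHom.id R A)

lemma tensorSnd_comp_comul :
    (tensorSnd R A A : A ⊗[R] A →ₗ[R] A) ∘ₗ comul = LinearMap.id := by
  rw [tensorSnd_toLinearMap, LinearMap.comp_assoc, CoassocSimps.map_counit_comp_comul_left]
  ext; simp

lemma map_tensorFst_tensorSnd_comp_comul :
    map (tensorFst R A B : A ⊗[R] B →ₗ[R] A) (tensorSnd R A B) ∘ₗ comul =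
      LinearMap.id := by
  have hswap : map (tensorFst R A B : A ⊗[R] B →ₗ[R] A) (tensorSnd R A B) ∘ₗ
      (TensorProduct.tensorTensorTensorComm R A A B B).toLinearMap =
      map (tensorFst R A A : A ⊗[R] A →ₗ[R] A) (tensorSnd R B B : B ⊗[R] B →ₗ[R] B) := by
    ext; simp [tensorFst_toLinearMap, tensorSnd_toLinearMap, smul_tmul]; exact smul_comm _ _ _
  rw [TensorProduct.comul_def, AlgebraTensorModule.tensorTensorTensorComm_eq,
    AlgebraTensorModule.map_eq, ← LinearMap.comp_assoc, hswap, ← TensorProduct.map_comp,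
    tensorFst_comp_comul, tensorSnd_comp_comul, TensorProduct.map_id]

lemma map_id_tensorFst_comp_comul :
    map LinearMap.id (tensorFst R A B : A ⊗[R] B →ₗ[R] A) ∘ₗ comul =
      (TensorProduct.assoc R A B A).symm.toLinearMap ∘ₗ
        map LinearMap.id (TensorProduct.comm R A B).toLinearMap ∘ₗ
        (TensorProduct.assoc R A A B).toLinearMap ∘ₗ map comul LinearMap.id := by
  have hswap : map LinearMap.id (tensorFst R A B : A ⊗[R] B →ₗ[R] A) ∘ₗ
      (TensorProduct.tensorTensorTensorComm R A A B B).toLinearMap =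
      ((TensorProduct.assoc R A B A).symm.toLinearMap ∘ₗ
        map LinearMap.id (TensorProduct.comm R A B).toLinearMap ∘ₗ
        (TensorProduct.assoc R A A B).toLinearMap) ∘ₗ
        map LinearMap.id (tensorFst R B B : B ⊗[R] B →ₗ[R] B) := by
    ext; simp [tensorFst_toLinearMap]
  rw [TensorProduct.comul_def, AlgebraTensorModule.tensorTensorTensorComm_eq,
    AlgebraTensorModule.map_eq, ← LinearMap.comp_assoc, hswap, LinearMap.comp_assoc,
    ← TensorProduct.map_comp, tensorFst_comp_comul]
  rfl

/-- Coassociativity writes both sides in terms of `c₁ ⊗ c₂ ⊗ c₃ ⊗ c₄`, and they differ only by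
swapping `c₂` and `c₃` between `f` and `g`, which `hcomm` allows. -/
lemma comul_comp_map_comp_comul (f : C →ₗc[R] A) (g : C →ₗc[R] B)
    (hcomm : map (f : C →ₗ[R] A) (g : C →ₗ[R] B) ∘ₗ comul =
      map (f : C →ₗ[R] A) (g : C →ₗ[R] B) ∘ₗ
        (TensorProduct.comm R C C).toLinearMap ∘ₗ comul) :
    comul ∘ₗ map (f : C →ₗ[R] A) (g : C →ₗ[R] B) ∘ₗ comul =
      map (map (f : C →ₗ[R] A) g ∘ₗ comul) (map (f : C →ₗ[R] A) g ∘ₗ comul) ∘ₗ comul := by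
  have hcomm' : map (g : C →ₗ[R] B) (f : C →ₗ[R] A) ∘ₗ
      (TensorProduct.comm R C C).toLinearMap ∘ₗ comul =
      map (g : C →ₗ[R] B) (f : C →ₗ[R] A) ∘ₗ comul := by
    rw [← LinearMap.comp_assoc, map_comp_comm_eq, LinearMap.comp_assoc, hcomm,
      ← LinearMap.comp_assoc, ← map_comp_comm_eq, LinearMap.comp_assoc,
      TensorProduct.comm_comp_comm_assoc]
  calc comul ∘ₗ map (f : C →ₗ[R] A) (g : C →ₗ[R] B) ∘ₗ comul
      = map (map (f : C →ₗ[R] A) g) (map (f : C →ₗ[R] A) g) ∘ₗ comul ∘ₗ comul := by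
        rw [← LinearMap.comp_assoc, ← LinearMap.comp_assoc]
        exact congrArg (· ∘ₗ comul) (Coalgebra.TensorProduct.map f g).map_comp_comul.symm
    _ = (TensorProduct.assoc R (A ⊗[R] B) A B).toLinearMap ∘ₗ
          map ((TensorProduct.assoc R A B A).symm.toLinearMap ∘ₗ
            map (f : C →ₗ[R] A) (map (g : C →ₗ[R] B) f ∘ₗ
              (TensorProduct.comm R C C).toLinearMap ∘ₗ comul) ∘ₗ comul) g ∘ₗ comul := by
        simp only [TensorProduct.comul_def, coassoc_simps]
    _ = (TensorProduct.assoc R (A ⊗[R] B) A B).toLinearMap ∘ₗ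
          map ((TensorProduct.assoc R A B A).symm.toLinearMap ∘ₗ
            map (f : C →ₗ[R] A) (map (g : C →ₗ[R] B) f ∘ₗ comul) ∘ₗ comul) g ∘ₗ comul := by
        rw [hcomm']
    _ = _ := by simp only [coassoc_simps]

end TensorCoalgebra

section ConvAct

variable {R A M C D : Type*} [CommSemiring R] [Semiring A] [Algebra R A] [AddCommMonoid M]
  [Module R M] [AddCommMonoid C] [Module R C] [Coalgebra R C] [AddCommMonoid D] [Module R D]
  [Coalgebra R D]

/-- The action `c ↦ act (φ c₁ ⊗ χ c₂)` of the convolution algebra `WithConv (C →ₗ A)` on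
`C →ₗ M` induced by `act`. -/
def convAct (act : A ⊗[R] M →ₗ[R] M) (φ : WithConv (C →ₗ[R] A)) (χ : C →ₗ[R] M) :
    C →ₗ[R] M :=
  act ∘ₗ map φ.ofConv χ ∘ₗ comul

variable {act : A ⊗[R] M →ₗ[R] M}

lemma convAct_mul
    (hmul : act ∘ₗ map LinearMap.id act ∘ₗ (TensorProduct.assoc R A A M).toLinearMap =
      act ∘ₗ map (LinearMap.mul' R A) LinearMap.id)
    (φ ψ : WithConv (C →ₗ[R] A)) (χ : C →ₗ[R] M) :
    convAct act (φ * ψ) χ = convAct act φ (convAct act ψ χ) := by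
  calc convAct act (φ * ψ) χ
      = (act ∘ₗ map (LinearMap.mul' R A) LinearMap.id) ∘ₗ
          map (map φ.ofConv ψ.ofConv) χ ∘ₗ map comul LinearMap.id ∘ₗ comul := by
        simp only [convAct, LinearMap.convMul_def, ofConv_toConv, coassoc_simps]
    _ = (act ∘ₗ map LinearMap.id act ∘ₗ (TensorProduct.assoc R A A M).toLinearMap) ∘ₗ
          map (map φ.ofConv ψ.ofConv) χ ∘ₗ map comul LinearMap.id ∘ₗ comul := by rw [hmul]
    _ = convAct act φ (convAct act ψ χ) := by
        simp only [convAct, coassoc_simps]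

lemma convAct_one (hone : ∀ m : M, act (1 ⊗ₜ m) = m) (χ : C →ₗ[R] M) :
    convAct act 1 χ = χ := by
  rw [convAct, LinearMap.convOne_def, ofConv_toConv, ← LinearMap.comp_id χ,
    TensorProduct.map_comp, LinearMap.comp_assoc, CoassocSimps.map_counit_comp_comul_left]
  ext c; simp [hone]

lemma convAct_comp {r : D →ₗ[R] C} (hr : comul ∘ₗ r = map r r ∘ₗ comul)
    (φ : WithConv (C →ₗ[R] A)) (χ : C →ₗ[R] M) :
    convAct act φ χ ∘ₗ r = convAct act (toConv (φ.ofConv ∘ₗ r)) (χ ∘ₗ r) := by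
  rw [convAct, convAct, LinearMap.comp_assoc, LinearMap.comp_assoc, hr, ofConv_toConv,
    TensorProduct.map_comp, LinearMap.comp_assoc]

lemma convAct_tensorFst_tensorSnd [Coalgebra R A] [Coalgebra R M] :
    convAct act (toConv (tensorFst R A M : A ⊗[R] M →ₗ[R] A)) (tensorSnd R A M) = act := by
  rw [convAct, ofConv_toConv, map_tensorFst_tensorSnd_comp_comul, LinearMap.comp_id]

end ConvAct

section Antipode

variable {R A M C : Type*} [CommSemiring R] [Semiring A] [HopfAlgebra R A] [AddCommMonoid M]
  [Module R M] [AddCommMonoid C] [Module R C] [Coalgebra R C] {act : A ⊗[R] M →ₗ[R] M}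

lemma antipode_comp_mul_self (f : C →ₗc[R] A) :
    toConv (HopfAlgebra.antipode R ∘ₗ (f : C →ₗ[R] A)) * toConv (f : C →ₗ[R] A) = 1 := by
  apply ofConv_injective
  calc _ = (toConv (HopfAlgebra.antipode R) * toConv LinearMap.id :
          WithConv (A →ₗ[R] A)).ofConv ∘ₗ (f : C →ₗ[R] A) :=
        (LinearMap.convMul_comp_coalgHom_distrib _ _ f).symm
    _ = _ := by rw [LinearMap.antipode_mul_id]; ext c; simp

lemma mul_antipode_comp_self (f : C →ₗc[R] A) :
    toConv (f : C →ₗ[R] A) * toConv (HopfAlgebra.antipode R ∘ₗ (f : C →ₗ[R] A)) = 1 := by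
  apply ofConv_injective
  calc _ = (toConv LinearMap.id * toConv (HopfAlgebra.antipode R) :
          WithConv (A →ₗ[R] A)).ofConv ∘ₗ (f : C →ₗ[R] A) :=
        (LinearMap.convMul_comp_coalgHom_distrib _ _ f).symm
    _ = _ := by rw [LinearMap.id_mul_antipode]; ext c; simp

lemma convAct_eq_iff_eq_convAct_antipode_comp
    (hmul : act ∘ₗ map LinearMap.id act ∘ₗ (TensorProduct.assoc R A A M).toLinearMap =
      act ∘ₗ map (LinearMap.mul' R A) LinearMap.id)
    (hone : ∀ m : M, act (1 ⊗ₜ m) = m) (f : C →ₗc[R] A) (χ ψ : C →ₗ[R] M) :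
    convAct act (toConv (f : C →ₗ[R] A)) χ = ψ ↔
      χ = convAct act (toConv (HopfAlgebra.antipode R ∘ₗ (f : C →ₗ[R] A))) ψ := by
  constructor
  · rintro rfl
    rw [← convAct_mul hmul, antipode_comp_mul_self, convAct_one hone]
  · rintro rfl
    rw [← convAct_mul hmul, mul_antipode_comp_self, convAct_one hone]

end Antipode

section MatchedPair

variable {f g : H ⊗[k] H →ₗ[k] H}

def IsLeftModuleCoalgebraAction.toCoalgHom (hf : IsLeftModuleCoalgebraAction f) :
    H ⊗[k] H →ₗc[k] H where
  toLinearMap := f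
  counit_comp := by rw [hf.counit_comp]; ext; simp [mul_comm]
  map_comp_comul := hf.comul_comp.symm

def IsRightModuleCoalgebraAction.toCoalgHom (hg : IsRightModuleCoalgebraAction g) :
    H ⊗[k] H →ₗc[k] H where
  toLinearMap := g
  counit_comp := by rw [hg.counit_comp]; ext; simp [mul_comm]
  map_comp_comul := hg.comul_comp.symm

lemma tensorFst_comp_ybOp (hg : IsRightModuleCoalgebraAction g) :
    (tensorFst k H H : H ⊗[k] H →ₗ[k] H) ∘ₗ ybOp k H f g = f :=
  tensorFst_comp_map_comp_comul f hg.toCoalgHom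

lemma IsMatchedPairOfActions.comul_comp_ybOp (h : IsMatchedPairOfActions f g) :
    comul ∘ₗ ybOp k H f g = map (ybOp k H f g) (ybOp k H f g) ∘ₗ comul :=
  comul_comp_map_comp_comul h.left.toCoalgHom h.right.toCoalgHom h.mp5

lemma comp_map_comp_sweedlerLeft (φ : H ⊗[k] H →ₗ[k] H) :
    f ∘ₗ map φ LinearMap.id ∘ₗ sweedlerLeft k H =
      convAct f (toConv φ) (tensorFst k H H : H ⊗[k] H →ₗ[k] H) := by
  rw [sweedlerLeft, ← map_id_tensorFst_comp_comul, ← LinearMap.comp_assoc comul,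
    ← TensorProduct.map_comp, LinearMap.comp_id, LinearMap.id_comp]
  rfl

lemma IsMatchedPairOfActions.ybOp_comp_ybOp_eq_id_iff (h : IsMatchedPairOfActions f g) :
    ybOp k H f g ∘ₗ ybOp k H f g = LinearMap.id ↔
      f ∘ₗ ybOp k H f g = tensorFst k H H := by
  have hinv := convAct_eq_iff_eq_convAct_antipode_comp (C := H ⊗[k] H)
    h.left.mul_act h.left.one_act
  constructor
  · intro hrr
    calc f ∘ₗ ybOp k H f g
        = ((tensorFst k H H : H ⊗[k] H →ₗ[k] H) ∘ₗ ybOp k H f g) ∘ₗ ybOp k H f g := by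
          rw [tensorFst_comp_ybOp h.right]
      _ = tensorFst k H H := by rw [LinearMap.comp_assoc, hrr, LinearMap.comp_id]
  · intro hfr
    have hg : g = convAct f (toConv (HopfAlgebra.antipode k ∘ₗ f)) (tensorFst k H H) :=
      (hinv h.left.toCoalgHom g _).1 hfr
    have hgr : g ∘ₗ ybOp k H f g = tensorSnd k H H := by
      rw [congrArg (· ∘ₗ ybOp k H f g) hg, convAct_comp h.comul_comp_ybOp, ofConv_toConv,
        LinearMap.comp_assoc, hfr, tensorFst_comp_ybOp h.right]
      exact ((hinv (tensorFst k H H) _ _).1 (convAct_tensorFst_tensorSnd (act := f))).symm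
    calc ybOp k H f g ∘ₗ ybOp k H f g = map f g ∘ₗ comul ∘ₗ ybOp k H f g := rfl
      _ = map (f ∘ₗ ybOp k H f g) (g ∘ₗ ybOp k H f g) ∘ₗ comul := by
        rw [h.comul_comp_ybOp, ← LinearMap.comp_assoc, ← TensorProduct.map_comp]
      _ = LinearMap.id := by rw [hfr, hgr, map_tensorFst_tensorSnd_comp_comul]

end MatchedPair

/-- For a matched pair of actions `(⇀, ↼)` on a Hopf algebra `H`, the associated
Yang–Baxter operator `r` is involutive iff `x ↼ y = S(x₁ ⇀ y) ⇀ x₂` for all `x, y`. -/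
theorem ybOp_involutive_iff (f g : H ⊗[k] H →ₗ[k] H)
    (h : IsMatchedPairOfActions f g) :
    (ybOp k H f g ∘ₗ ybOp k H f g = LinearMap.id) ↔
      g = f ∘ₗ
        TensorProduct.map (HopfAlgebra.antipode (R := k) ∘ₗ f) LinearMap.id ∘ₗ
        sweedlerLeft k H := by
  rw [comp_map_comp_sweedlerLeft]
  exact h.ybOp_comp_ybOp_eq_id_iff.trans
    (convAct_eq_iff_eq_convAct_antipode_comp h.left.mul_act h.left.one_act h.left.toCoalgHom _ _)

end
end

section
/- In the Kac–Paljutkin algebra H_8, an element x satisfies Δ(x) = x⊗x and ε(x) = 1 if and only if x ∈ {1, g, h, gh}; in particular, the group G(H_8) of group-like elements of H_8 is isomorphic to the Klein four-group C₂×C₂. -/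
open TensorProduct

noncomputable section

/-! ### The Kac–Paljutkin algebra `H₈`, characterized by generators and relations.

A Hopf algebra `H` over `k` together with elements `g h z : H` and a basis
`b = (1, g, h, gh, z, gz, hz, ghz)` satisfying the defining relations of the
Kac–Paljutkin algebra.  Since the comultiplication, counit and antipode of a Hopf
algebra are (anti)algebra morphisms, these data determine the whole Hopf algebra
structure of `H₈`. -/
structure IsKacPaljutkin (k H : Type) [Field k] [Ring H] [HopfAlgebra k H]
    (g h z : H) (b : Module.Basis (Fin 8) k H) : Prop where
  basis_eq : ⇑b = ![1, g, h, g * h, z, g * z, h * z, g * h * z]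
  g_sq : g * g = 1
  h_sq : h * h = 1
  z_sq : z * z = (2 : k)⁻¹ • (1 + g + h - g * h)
  gh_comm : g * h = h * g
  zg : z * g = h * z
  zh : z * h = g * z
  comul_g : Coalgebra.comul (R := k) g = g ⊗ₜ[k] g
  comul_h : Coalgebra.comul (R := k) h = h ⊗ₜ[k] h
  comul_z : Coalgebra.comul (R := k) z
    = (2 : k)⁻¹ • (z ⊗ₜ[k] z + (g * z) ⊗ₜ[k] z + z ⊗ₜ[k] (h * z) - (g * z) ⊗ₜ[k] (h * z))
  counit_g : Coalgebra.counit (R := k) g = 1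
  counit_h : Coalgebra.counit (R := k) h = 1
  counit_z : Coalgebra.counit (R := k) z = 1
  antipode_g : HopfAlgebra.antipode (R := k) g = g
  antipode_h : HopfAlgebra.antipode (R := k) h = h
  antipode_z : HopfAlgebra.antipode (R := k) z = z

/-- The element `z³ = (1/2)(z + gz + hz - ghz)` of the Kac–Paljutkin algebra. -/
def zCubed (k : Type) {H : Type} [Field k] [Ring H] [HopfAlgebra k H] (g h z : H) : H :=
  (2 : k)⁻¹ • (z + g * z + h * z - g * h * z)

end

/-! The coefficients `xᵢ` of a group-like `x` in the basis satisfy `xᵢ xⱼ = Δ(x)ᵢⱼ`. On the odd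
part `span {z, gz, hz, ghz}` every entry of `Δ` is `±½` times a single odd coefficient, and the
resulting quadratic equations force the odd coefficients to vanish. Group-like elements are
linearly independent, so a group-like element of `span {1, g, h, gh}` is one of `1, g, h, gh`. -/

open Coalgebra

section GroupLike

variable {K A : Type*} [Field K] [AddCommGroup A] [Module K A] [Coalgebra K A] {a : A}

lemma IsGroupLikeElem.mem_of_mem_span {s : Set A} (hs : ∀ b ∈ s, IsGroupLikeElem K b)
    (ha : IsGroupLikeElem K a) (has : a ∈ Submodule.span K s) : a ∈ s :=
  (linearIndepOn_id_insert_iff.1 <| linearIndepOn_isGroupLikeElem.mono <|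
    Set.insert_subset ha hs).2 has

lemma IsGroupLikeElem.tensorProduct_repr_comul {ι : Type*} (b : Module.Basis ι K A)
    (ha : IsGroupLikeElem K a) (i j : ι) :
    (b.tensorProduct b).repr (comul a) (i, j) = b.repr a i * b.repr a j := by
  rw [ha.comul_eq_tmul_self, Module.Basis.tensorProduct_repr_tmul_apply, smul_eq_mul, mul_comm]

lemma Module.Basis.tensorProduct_repr_comul {ι : Type*} [Fintype ι] (b : Module.Basis ι K A)
    (a : A) (p : ι × ι) :
    (b.tensorProduct b).repr (comul a) p =
      ∑ l, b.repr a l * (b.tensorProduct b).repr (comul (b l)) p := by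
  conv_lhs => rw [← b.sum_repr a]
  simp only [map_sum, map_smul, Finsupp.coe_finsetSum, Finset.sum_apply, Finsupp.smul_apply,
    smul_eq_mul]

end GroupLike

section KleinFour

lemma ZMod.exists_two {p : ZMod 2 → Prop} : (∃ a, p a) ↔ p 0 ∨ p 1 := Fin.exists_fin_two

lemma ZMod.forall_two {p : ZMod 2 → Prop} : (∀ a, p a) ↔ p 0 ∧ p 1 := Fin.forall_fin_two

variable {M : Type*} [Monoid M]

lemma pow_val_add_of_pow_eq_one {n : ℕ} [NeZero n] {x : M} (hx : x ^ n = 1) (u v : ZMod n) :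
    x ^ (u + v).val = x ^ u.val * x ^ v.val := by
  rw [ZMod.val_add, ← pow_add, ← pow_eq_pow_mod _ hx]

def kleinFour (g h : M) (u : ZMod 2 × ZMod 2) : M := g ^ u.1.val * h ^ u.2.val

variable {g h : M}

@[simp] lemma kleinFour_zero (g h : M) : kleinFour g h 0 = 1 := by simp [kleinFour]

lemma exists_kleinFour_eq_iff {x : M} :
    (∃ u, kleinFour g h u = x) ↔ x = 1 ∨ x = g ∨ x = h ∨ x = g * h := by
  simp only [kleinFour, Prod.exists, ZMod.exists_two, ZMod.val_zero, ZMod.val_one, pow_zero,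
    pow_one, one_mul, mul_one]
  tauto

lemma kleinFour_eq_one_iff (hg : g ≠ 1) (hh : h ≠ 1) (hgh : g * h ≠ 1) {u : ZMod 2 × ZMod 2} :
    kleinFour g h u = 1 ↔ u = 0 := by
  revert u
  simp [kleinFour, Prod.forall, ZMod.forall_two, ZMod.val_one, hg, hh, hgh]

lemma kleinFour_add (hg : g ^ 2 = 1) (hh : h ^ 2 = 1) (hgh : Commute g h)
    (u v : ZMod 2 × ZMod 2) : kleinFour g h (u + v) = kleinFour g h u * kleinFour g h v := by
  simp only [kleinFour, Prod.fst_add, Prod.snd_add, pow_val_add_of_pow_eq_one hg,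
    pow_val_add_of_pow_eq_one hh, ((hgh.pow_pow _ _).symm).left_comm, mul_assoc]

lemma kleinFour_injective (hg : g ^ 2 = 1) (hh : h ^ 2 = 1) (hgh : Commute g h)
    (hg1 : g ≠ 1) (hh1 : h ≠ 1) (hgh1 : g * h ≠ 1) : Function.Injective (kleinFour g h) := by
  intro u v huv
  have : kleinFour g h (u + v) = 1 := by
    rw [kleinFour_add hg hh hgh, huv, ← kleinFour_add hg hh hgh, CharTwo.add_self_eq_zero,
      kleinFour_zero]
  rwa [kleinFour_eq_one_iff hg1 hh1 hgh1, CharTwo.add_eq_zero] at this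

end KleinFour

namespace IsKacPaljutkin

variable {k H : Type} [Field k] [Ring H] [HopfAlgebra k H] {g h z : H}
  {b : Module.Basis (Fin 8) k H}

lemma isGroupLikeElem_g (hKP : IsKacPaljutkin k H g h z b) : IsGroupLikeElem k g :=
  ⟨hKP.counit_g, hKP.comul_g⟩

lemma isGroupLikeElem_h (hKP : IsKacPaljutkin k H g h z b) : IsGroupLikeElem k h :=
  ⟨hKP.counit_h, hKP.comul_h⟩

lemma isGroupLikeElem_basis (hKP : IsKacPaljutkin k H g h z b) {l : Fin 8} (hl : l < 4) :
    IsGroupLikeElem k (b l) := by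
  have hg := hKP.isGroupLikeElem_g
  have hh := hKP.isGroupLikeElem_h
  fin_cases l <;> simp_all [hKP.basis_eq, IsGroupLikeElem.one, hg.mul hh]

lemma g_ne_one (hKP : IsKacPaljutkin k H g h z b) : g ≠ 1 := by
  simpa [hKP.basis_eq] using b.injective.ne (show (1 : Fin 8) ≠ 0 by decide)

lemma h_ne_one (hKP : IsKacPaljutkin k H g h z b) : h ≠ 1 := by
  simpa [hKP.basis_eq] using b.injective.ne (show (2 : Fin 8) ≠ 0 by decide)

lemma g_mul_h_ne_one (hKP : IsKacPaljutkin k H g h z b) : g * h ≠ 1 := by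
  simpa [hKP.basis_eq] using b.injective.ne (show (3 : Fin 8) ≠ 0 by decide)

lemma g_mul_g_mul (hKP : IsKacPaljutkin k H g h z b) (x : H) : g * (g * x) = x := by
  rw [← mul_assoc, hKP.g_sq, one_mul]

lemma h_mul_h_mul (hKP : IsKacPaljutkin k H g h z b) (x : H) : h * (h * x) = x := by
  rw [← mul_assoc, hKP.h_sq, one_mul]

lemma h_mul_g_mul (hKP : IsKacPaljutkin k H g h z b) (x : H) : h * (g * x) = g * (h * x) := by
  rw [← mul_assoc, ← hKP.gh_comm, mul_assoc]

lemma basis_four (hKP : IsKacPaljutkin k H g h z b) : b 4 = z := by simp [hKP.basis_eq]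

lemma basis_five (hKP : IsKacPaljutkin k H g h z b) : b 5 = g * z := by simp [hKP.basis_eq]

lemma basis_six (hKP : IsKacPaljutkin k H g h z b) : b 6 = h * z := by simp [hKP.basis_eq]

lemma basis_seven (hKP : IsKacPaljutkin k H g h z b) : b 7 = g * (h * z) := by
  simp [hKP.basis_eq, mul_assoc]

lemma comul_mul_z (hKP : IsKacPaljutkin k H g h z b) {a : H} (ha : IsGroupLikeElem k a) :
    comul (R := k) (a * z) = (2 : k)⁻¹ • ((a * z) ⊗ₜ (a * z) + (a * (g * z)) ⊗ₜ (a * z) +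
      (a * z) ⊗ₜ (a * (h * z)) - (a * (g * z)) ⊗ₜ (a * (h * z))) := by
  simp only [Bialgebra.comul_mul, ha.comul_eq_tmul_self, hKP.comul_z, mul_smul_comm, mul_add,
    mul_sub, Algebra.TensorProduct.tmul_mul_tmul]

lemma comul_basis_four (hKP : IsKacPaljutkin k H g h z b) : comul (R := k) (b 4) =
    (2 : k)⁻¹ • (b 4 ⊗ₜ b 4 + b 5 ⊗ₜ b 4 + b 4 ⊗ₜ b 6 - b 5 ⊗ₜ b 6) := by
  simpa [hKP.basis_four, hKP.basis_five, hKP.basis_six] using hKP.comul_mul_z .one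

lemma comul_basis_five (hKP : IsKacPaljutkin k H g h z b) : comul (R := k) (b 5) =
    (2 : k)⁻¹ • (b 5 ⊗ₜ b 5 + b 4 ⊗ₜ b 5 + b 5 ⊗ₜ b 7 - b 4 ⊗ₜ b 7) := by
  simpa [hKP.basis_four, hKP.basis_five, hKP.basis_seven, hKP.g_mul_g_mul, mul_assoc]
    using hKP.comul_mul_z hKP.isGroupLikeElem_g

lemma comul_basis_six (hKP : IsKacPaljutkin k H g h z b) : comul (R := k) (b 6) =
    (2 : k)⁻¹ • (b 6 ⊗ₜ b 6 + b 7 ⊗ₜ b 6 + b 6 ⊗ₜ b 4 - b 7 ⊗ₜ b 4) := by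
  simpa [hKP.basis_four, hKP.basis_six, hKP.basis_seven, hKP.h_mul_h_mul, hKP.h_mul_g_mul,
    mul_assoc] using hKP.comul_mul_z hKP.isGroupLikeElem_h

lemma comul_basis_seven (hKP : IsKacPaljutkin k H g h z b) : comul (R := k) (b 7) =
    (2 : k)⁻¹ • (b 7 ⊗ₜ b 7 + b 6 ⊗ₜ b 7 + b 7 ⊗ₜ b 5 - b 6 ⊗ₜ b 5) := by
  simpa [hKP.basis_five, hKP.basis_six, hKP.basis_seven, hKP.h_mul_h_mul, hKP.h_mul_g_mul,
    hKP.g_mul_g_mul, mul_assoc]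
    using hKP.comul_mul_z (hKP.isGroupLikeElem_g.mul hKP.isGroupLikeElem_h)

lemma repr_eq_zero_of_four_le [NeZero (2 : k)] (hKP : IsKacPaljutkin k H g h z b) {x : H}
    (hx : IsGroupLikeElem k x) {l : Fin 8} (hl : 4 ≤ l) : b.repr x l = 0 := by
  have coeff (i j : Fin 8) : b.repr x i * b.repr x j =
      ∑ m, b.repr x m * (b.tensorProduct b).repr (comul (b m)) (i, j) := by
    rw [← hx.tensorProduct_repr_comul, b.tensorProduct_repr_comul]
  have e44 := coeff 4 4
  have e54 := coeff 5 4
  have e46 := coeff 4 6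
  have e56 := coeff 5 6
  have e45 := coeff 4 5
  have e64 := coeff 6 4
  have e67 := coeff 6 7
  simp only [Fin.sum_univ_eight, Fin.reduceLT, (hKP.isGroupLikeElem_basis _).comul_eq_tmul_self,
    hKP.comul_basis_four, hKP.comul_basis_five, hKP.comul_basis_six, hKP.comul_basis_seven,
    Module.Basis.tensorProduct_repr_tmul_apply, Module.Basis.repr_self, ne_eq, Fin.reduceEq,
    not_false_eq_true, Finsupp.single_eq_of_ne, Finsupp.single_eq_same, smul_eq_mul, map_smul,
    map_sub, map_add, Finsupp.coe_smul, Finsupp.coe_sub, Finsupp.coe_add, Pi.smul_apply,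
    Pi.sub_apply, Pi.add_apply, mul_zero, add_zero, mul_one, sub_zero, zero_add, sub_self,
    zero_sub, mul_neg] at e44 e54 e46 e56 e45 e64 e67
  set c := b.repr x
  have half_ne : (2 : k)⁻¹ ≠ 0 := inv_ne_zero two_ne_zero
  have h4 : c 4 = 0 := by
    -- `c 4 ≠ 0` would give `c 4 = c 5 = c 6 = ½`, against `c 5 * c 6 = -½ * c 4`
    have : 2 * ((2 : k)⁻¹ * c 4) ^ 2 = 0 := by
      linear_combination -(c 4 * c 6) * e54 - 2⁻¹ * c 4 * e46 + c 4 ^ 2 * e56 - 2⁻¹ * c 4 * e44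
    simpa [two_ne_zero] using this
  rw [h4, zero_mul] at e45
  rw [h4, mul_zero] at e64
  have h5 : c 5 = 0 := (mul_eq_zero.1 e45.symm).resolve_right half_ne
  have h6 : c 6 = 0 := (mul_eq_zero.1 e64.symm).resolve_right half_ne
  rw [h6, zero_mul] at e67
  have h7 : c 7 = 0 := (mul_eq_zero.1 e67.symm).resolve_right half_ne
  fin_cases l <;> first | assumption | exact absurd hl (by decide)

lemma isGroupLikeElem_iff [NeZero (2 : k)] (hKP : IsKacPaljutkin k H g h z b) {x : H} :
    IsGroupLikeElem k x ↔ x = 1 ∨ x = g ∨ x = h ∨ x = g * h := by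
  have image_eq : b '' Set.Iio 4 = {1, g, h, g * h} := by
    rw [show (Set.Iio 4 : Set (Fin 8)) = {0, 1, 2, 3} by ext l; fin_cases l <;> decide]
    simp [Set.image_insert_eq, hKP.basis_eq]
  suffices IsGroupLikeElem k x ↔ x ∈ b '' Set.Iio 4 by simpa [image_eq] using this
  have basis_grouplike : ∀ y ∈ b '' Set.Iio 4, IsGroupLikeElem k y := by
    rintro _ ⟨l, hl, rfl⟩
    exact hKP.isGroupLikeElem_basis hl
  refine ⟨fun hx ↦ hx.mem_of_mem_span basis_grouplike ?_, basis_grouplike x⟩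
  rw [b.mem_span_image]
  intro l hl
  by_contra hl4
  exact (Finsupp.mem_support_iff.1 hl) (hKP.repr_eq_zero_of_four_le hx (not_lt.1 hl4))

end IsKacPaljutkin

theorem grouplikes_of_KacPaljutkin_general {k H : Type} [Field k] [CharZero k]
    [Ring H] [HopfAlgebra k H] (g h z : H) (b : Module.Basis (Fin 8) k H)
    (hKP : IsKacPaljutkin k H g h z b) :
    (∀ x : H, (Coalgebra.comul (R := k) x = x ⊗ₜ[k] x ∧ Coalgebra.counit (R := k) x = 1) ↔
      (x = 1 ∨ x = g ∨ x = h ∨ x = g * h)) ∧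
    ∃ f : ZMod 2 × ZMod 2 → H, Function.Injective f ∧
      (∀ x : H, (Coalgebra.comul (R := k) x = x ⊗ₜ[k] x ∧ Coalgebra.counit (R := k) x = 1)
        ↔ ∃ u, f u = x) ∧
      f 0 = 1 ∧ ∀ u v, f (u + v) = f u * f v := by
  have grouplike_iff (x : H) :
      (comul (R := k) x = x ⊗ₜ[k] x ∧ counit (R := k) x = 1) ↔
        (x = 1 ∨ x = g ∨ x = h ∨ x = g * h) := by
    rw [and_comm, ← isGroupLikeElem_iff, hKP.isGroupLikeElem_iff]
  have hg : g ^ 2 = 1 := by rw [sq, hKP.g_sq]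
  have hh : h ^ 2 = 1 := by rw [sq, hKP.h_sq]
  exact ⟨grouplike_iff, kleinFour g h,
    kleinFour_injective hg hh hKP.gh_comm hKP.g_ne_one hKP.h_ne_one hKP.g_mul_h_ne_one,
    fun x ↦ (grouplike_iff x).trans exists_kleinFour_eq_iff.symm, kleinFour_zero g h,
    kleinFour_add hg hh hKP.gh_comm⟩

/-- In the Kac–Paljutkin algebra `H₈`, an element `x` is group-like
(`Δ(x) = x ⊗ x` and `ε(x) = 1`) iff `x ∈ {1, g, h, gh}`; moreover the group of
group-like elements is isomorphic to the Klein four-group `C₂ × C₂`. -/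
theorem grouplikes_of_KacPaljutkin {k H : Type} [Field k] [CharZero k] [IsAlgClosed k]
    [Ring H] [HopfAlgebra k H] (g h z : H) (b : Module.Basis (Fin 8) k H)
    (hKP : IsKacPaljutkin k H g h z b) :
    (∀ x : H, (Coalgebra.comul (R := k) x = x ⊗ₜ[k] x ∧ Coalgebra.counit (R := k) x = 1) ↔
      (x = 1 ∨ x = g ∨ x = h ∨ x = g * h)) ∧
    ∃ f : ZMod 2 × ZMod 2 → H, Function.Injective f ∧
      (∀ x : H, (Coalgebra.comul (R := k) x = x ⊗ₜ[k] x ∧ Coalgebra.counit (R := k) x = 1)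
        ↔ ∃ u, f u = x) ∧
      f 0 = 1 ∧ ∀ u v, f (u + v) = f u * f v :=
  grouplikes_of_KacPaljutkin_general g h z b hKP
end

section
/- For every matched pair of actions (⇀, ↼) on the Kac–Paljutkin algebra H_8, each of the elements z ⇀ g, z ⇀ h, z ⇀ gh is a group-like element different from 1 (hence lies in {g, h, gh}), and likewise each of g ↼ z, h ↼ z, gh ↼ z lies in {g, h, gh}. -/
open TensorProduct

/- The matched-pair axiom `(x₁ ⇀ a₁) ⊗ (x₂ ↼ a₂) = (x₂ ⇀ a₂) ⊗ (x₁ ↼ a₁)` at `x ⊗ a = z ⊗ γ`,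
for an involutive group-like `γ ∈ {g, h, gh}`, becomes after cancelling the involution `· ↼ γ`
the statement that `(· ⇀ γ) ⊗ id` takes the same value on `Δ z` and on its flip. Reading off
coordinates gives `gz ⇀ γ = z ⇀ γ = hz ⇀ γ`, and since `⇀` is a coalgebra map,
`Δ (z ⇀ γ) = Σ (z₁ ⇀ γ) ⊗ (z₂ ⇀ γ)` collapses to `(z ⇀ γ) ⊗ (z ⇀ γ)`. The group-like elements of
`H₈` are `1, g, h, gh`: comparing coefficients of `Δ u` and `u ⊗ u` shows that a group-like `u`
has no `z`-part, and group-like elements are linearly independent. Finally `z ⇀ γ ≠ 1`, since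
otherwise `γ = z⁴ ⇀ γ = 1`. The right action is handled symmetrically. -/

open TensorProduct

section MatchedPair

variable {k H : Type} [Field k] [Ring H] [HopfAlgebra k H] {f g : H ⊗[k] H →ₗ[k] H} {γ : H}

lemma IsGroupLikeElem.sweedler2_tmul_right (hγ : IsGroupLikeElem k γ) (x : H) :
    sweedler2 k H (x ⊗ₜ γ) =
      TensorProduct.map ((TensorProduct.mk k H H).flip γ) ((TensorProduct.mk k H H).flip γ)
        (Coalgebra.comul x) := by
  simp only [sweedler2, LinearMap.comp_apply, map_tmul, hγ.comul_eq_tmul_self,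
    LinearEquiv.coe_coe]
  induction Coalgebra.comul (R := k) x with
  | zero => simp
  | tmul a b => simp
  | add a b ha hb => simp [add_tmul, ha, hb]

lemma IsGroupLikeElem.sweedler2_tmul_left (hγ : IsGroupLikeElem k γ) (x : H) :
    sweedler2 k H (γ ⊗ₜ x) =
      TensorProduct.map (TensorProduct.mk k H H γ) (TensorProduct.mk k H H γ)
        (Coalgebra.comul x) := by
  simp only [sweedler2, LinearMap.comp_apply, map_tmul, hγ.comul_eq_tmul_self,
    LinearEquiv.coe_coe]
  induction Coalgebra.comul (R := k) x with
  | zero => simp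
  | tmul a b => simp
  | add a b ha hb => simp [tmul_add, ha, hb]

namespace IsLeftModuleCoalgebraAction

variable (hf : IsLeftModuleCoalgebraAction f)
include hf

lemma act_act (x y w : H) : f (x ⊗ₜ f (y ⊗ₜ w)) = f ((x * y) ⊗ₜ w) := by
  simpa using LinearMap.congr_fun hf.mul_act ((x ⊗ₜ y) ⊗ₜ w)

lemma counit_apply (x y : H) :
    Coalgebra.counit (R := k) (f (x ⊗ₜ y)) = Coalgebra.counit x * Coalgebra.counit y := by
  simpa using LinearMap.congr_fun hf.counit_comp (x ⊗ₜ y)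

lemma comul_apply_tmul_of_isGroupLikeElem (hγ : IsGroupLikeElem k γ) (x : H) :
    Coalgebra.comul (R := k) (f (x ⊗ₜ γ)) =
      map (f ∘ₗ (TensorProduct.mk k H H).flip γ) (f ∘ₗ (TensorProduct.mk k H H).flip γ)
        (Coalgebra.comul x) := by
  rw [← LinearMap.comp_apply, hf.comul_comp, LinearMap.comp_apply,
    hγ.sweedler2_tmul_right, map_map]

lemma act_act_of_mul_self_eq_one (hγγ : γ * γ = 1) (y : H) :
    f (γ ⊗ₜ f (γ ⊗ₜ y)) = y := by
  rw [hf.act_act, hγγ, hf.one_act]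

end IsLeftModuleCoalgebraAction

namespace IsRightModuleCoalgebraAction

variable (hg : IsRightModuleCoalgebraAction g)
include hg

lemma act_act (x y w : H) : g (g (x ⊗ₜ y) ⊗ₜ w) = g (x ⊗ₜ (y * w)) := by
  simpa using LinearMap.congr_fun hg.act_mul ((x ⊗ₜ y) ⊗ₜ w)

lemma counit_apply (x y : H) :
    Coalgebra.counit (R := k) (g (x ⊗ₜ y)) = Coalgebra.counit x * Coalgebra.counit y := by
  simpa using LinearMap.congr_fun hg.counit_comp (x ⊗ₜ y)

lemma comul_apply_tmul_of_isGroupLikeElem (hγ : IsGroupLikeElem k γ) (x : H) :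
    Coalgebra.comul (R := k) (g (γ ⊗ₜ x)) =
      map (g ∘ₗ TensorProduct.mk k H H γ) (g ∘ₗ TensorProduct.mk k H H γ)
        (Coalgebra.comul x) := by
  rw [← LinearMap.comp_apply, hg.comul_comp, LinearMap.comp_apply,
    hγ.sweedler2_tmul_left, map_map]

lemma act_act_of_mul_self_eq_one (hγγ : γ * γ = 1) (y : H) :
    g (g (y ⊗ₜ γ) ⊗ₜ γ) = y := by
  rw [hg.act_act, hγγ, hg.act_one]

end IsRightModuleCoalgebraAction

namespace IsMatchedPairOfActions

variable (hmp : IsMatchedPairOfActions f g)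
include hmp

lemma eq_one_of_left_act_eq_one {x y : H} {n : ℕ} (hn : n ≠ 0) (hxn : x ^ n = 1)
    (hx : Coalgebra.counit (R := k) x = 1) (hxy : f (x ⊗ₜ y) = 1) : y = 1 := by
  obtain ⟨m, rfl⟩ := Nat.exists_eq_succ_of_ne_zero hn
  calc y = f ((x ^ (m + 1)) ⊗ₜ y) := by rw [hxn, hmp.left.one_act]
    _ = 1 := by
      rw [pow_succ, ← hmp.left.act_act, hxy, hmp.mp2, Bialgebra.counit_pow, hx, one_pow,
        one_smul]

lemma eq_one_of_right_act_eq_one {x y : H} {n : ℕ} (hn : n ≠ 0) (hxn : x ^ n = 1)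
    (hx : Coalgebra.counit (R := k) x = 1) (hyx : g (y ⊗ₜ x) = 1) : y = 1 := by
  obtain ⟨m, rfl⟩ := Nat.exists_eq_succ_of_ne_zero hn
  calc y = g (y ⊗ₜ (x ^ (m + 1))) := by rw [hxn, hmp.right.act_one]
    _ = 1 := by
      rw [pow_succ', ← hmp.right.act_act, hyx, hmp.mp4, Bialgebra.counit_pow, hx, one_pow,
        one_smul]

-- `· ↼ γ` is an involution, so it can be stripped from the second legs of `mp5` at `x ⊗ γ`.
lemma rTensor_comul_eq_rTensor_comm_comul (hγ : IsGroupLikeElem k γ) (hγγ : γ * γ = 1) (x : H) :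
    (f ∘ₗ (TensorProduct.mk k H H).flip γ).rTensor H (Coalgebra.comul x) =
      (f ∘ₗ (TensorProduct.mk k H H).flip γ).rTensor H
        (TensorProduct.comm k H H (Coalgebra.comul x)) := by
  have h5 := LinearMap.congr_fun hmp.mp5 (x ⊗ₜ γ)
  simp only [LinearMap.comp_apply, LinearEquiv.coe_coe, hγ.sweedler2_tmul_right,
    ← map_comm, map_map] at h5
  have hinv : (g ∘ₗ (TensorProduct.mk k H H).flip γ) ∘ₗ (g ∘ₗ (TensorProduct.mk k H H).flip γ) =
      LinearMap.id := by
    ext y; simp [hmp.right.act_act_of_mul_self_eq_one hγγ]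
  have hstrip := congrArg (map LinearMap.id (g ∘ₗ (TensorProduct.mk k H H).flip γ)) h5
  simpa only [map_map, LinearMap.id_comp, hinv, LinearMap.rTensor] using hstrip

lemma lTensor_comul_eq_lTensor_comm_comul (hγ : IsGroupLikeElem k γ) (hγγ : γ * γ = 1) (x : H) :
    (g ∘ₗ TensorProduct.mk k H H γ).lTensor H (Coalgebra.comul x) =
      (g ∘ₗ TensorProduct.mk k H H γ).lTensor H
        (TensorProduct.comm k H H (Coalgebra.comul x)) := by
  have h5 := LinearMap.congr_fun hmp.mp5 (γ ⊗ₜ x)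
  simp only [LinearMap.comp_apply, LinearEquiv.coe_coe, hγ.sweedler2_tmul_left,
    ← map_comm, map_map] at h5
  have hinv :
      (f ∘ₗ TensorProduct.mk k H H γ) ∘ₗ (f ∘ₗ TensorProduct.mk k H H γ) = LinearMap.id := by
    ext y; simp [hmp.left.act_act_of_mul_self_eq_one hγγ]
  have hstrip := congrArg (map (f ∘ₗ TensorProduct.mk k H H γ) LinearMap.id) h5
  simpa only [map_map, LinearMap.id_comp, hinv, LinearMap.lTensor] using hstrip

end IsMatchedPairOfActions

end MatchedPair

lemma Module.Basis.repr_mul_repr_of_comul_eq_tmul {R C ι : Type*} [CommSemiring R]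
    [AddCommMonoid C] [Module R C] [Coalgebra R C] [Fintype ι] (b : Module.Basis ι R C) {u : C}
    (hu : Coalgebra.comul (R := R) u = u ⊗ₜ u) (i j : ι) :
    b.repr u i * b.repr u j =
      ∑ m, b.repr u m * (b.tensorProduct b).repr (Coalgebra.comul (b m)) (i, j) := by
  calc b.repr u i * b.repr u j = (b.tensorProduct b).repr (u ⊗ₜ u) (i, j) := by
        simp [mul_comm]
    _ = (b.tensorProduct b).repr (Coalgebra.comul (∑ m, b.repr u m • b m)) (i, j) := by
        rw [b.sum_repr, hu]
    _ = _ := by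
        simp only [map_sum, map_smul, Finsupp.coe_finsetSum, Finset.sum_apply,
          Finsupp.smul_apply, smul_eq_mul]

namespace IsKacPaljutkin

variable {k H : Type} [Field k] [Ring H] [HopfAlgebra k H] {g h z : H}
  {b : Module.Basis (Fin 8) k H}

variable (hKP : IsKacPaljutkin k H g h z b)
include hKP

lemma isGroupLikeElem_g_s7 : IsGroupLikeElem k g := ⟨hKP.counit_g, hKP.comul_g⟩

lemma isGroupLikeElem_h_s7 : IsGroupLikeElem k h := ⟨hKP.counit_h, hKP.comul_h⟩

lemma gh_mul_gh : g * h * (g * h) = 1 := by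
  rw [mul_assoc, ← mul_assoc h, ← hKP.gh_comm, mul_assoc, hKP.h_sq, mul_one, hKP.g_sq]

lemma isGroupLikeElem_gh : IsGroupLikeElem k (g * h) :=
  hKP.isGroupLikeElem_g_s7.mul hKP.isGroupLikeElem_h_s7

lemma comul_gz : Coalgebra.comul (R := k) (g * z) = (2 : k)⁻¹ •
    ((g * z) ⊗ₜ (g * z) + z ⊗ₜ (g * z) + (g * z) ⊗ₜ (g * h * z) - z ⊗ₜ (g * h * z)) := by
  rw [Bialgebra.comul_mul, hKP.comul_g, hKP.comul_z, mul_smul_comm]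
  simp only [mul_add, mul_sub, Algebra.TensorProduct.tmul_mul_tmul, ← mul_assoc, hKP.g_sq,
    one_mul]

lemma comul_hz : Coalgebra.comul (R := k) (h * z) = (2 : k)⁻¹ •
    ((h * z) ⊗ₜ (h * z) + (g * h * z) ⊗ₜ (h * z) + (h * z) ⊗ₜ z - (g * h * z) ⊗ₜ z) := by
  rw [Bialgebra.comul_mul, hKP.comul_h, hKP.comul_z, mul_smul_comm]
  simp only [mul_add, mul_sub, Algebra.TensorProduct.tmul_mul_tmul, ← mul_assoc, hKP.h_sq,
    one_mul, hKP.gh_comm]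

lemma comul_ghz : Coalgebra.comul (R := k) (g * h * z) = (2 : k)⁻¹ •
    ((g * h * z) ⊗ₜ (g * h * z) + (h * z) ⊗ₜ (g * h * z) + (g * h * z) ⊗ₜ (g * z)
      - (h * z) ⊗ₜ (g * z)) := by
  rw [mul_assoc, Bialgebra.comul_mul, hKP.comul_g, hKP.comul_hz, mul_smul_comm]
  simp only [mul_add, mul_sub, Algebra.TensorProduct.tmul_mul_tmul, ← mul_assoc, hKP.g_sq,
    one_mul]

lemma repr_one : b.repr 1 = Finsupp.single 0 1 := by simpa [hKP.basis_eq] using b.repr_self 0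
lemma repr_g : b.repr g = Finsupp.single 1 1 := by simpa [hKP.basis_eq] using b.repr_self 1
lemma repr_h : b.repr h = Finsupp.single 2 1 := by simpa [hKP.basis_eq] using b.repr_self 2
lemma repr_gh : b.repr (g * h) = Finsupp.single 3 1 := by simpa [hKP.basis_eq] using b.repr_self 3
lemma repr_z : b.repr z = Finsupp.single 4 1 := by simpa [hKP.basis_eq] using b.repr_self 4
lemma repr_gz : b.repr (g * z) = Finsupp.single 5 1 := by simpa [hKP.basis_eq] using b.repr_self 5
lemma repr_hz : b.repr (h * z) = Finsupp.single 6 1 := by simpa [hKP.basis_eq] using b.repr_self 6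
lemma repr_ghz : b.repr (g * h * z) = Finsupp.single 7 1 := by
  simpa [hKP.basis_eq] using b.repr_self 7

lemma mem_span_of_isGroupLikeElem [CharZero k] {u : H} (hu : IsGroupLikeElem k u) :
    u ∈ Submodule.span k {1, g, h, g * h} := by
  -- Six coefficients of `Δ u = u ⊗ u` in the basis `b ⊗ b` already kill the `z`-part of `u`.
  have key := b.repr_mul_repr_of_comul_eq_tmul hu.comul_eq_tmul_self
  have e45 := key 4 5
  have e54 := key 5 4
  have e46 := key 4 6
  have e56 := key 5 6
  have e64 := key 6 4
  have e67 := key 6 7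
  simp [Fin.sum_univ_eight, hKP.basis_eq, Algebra.TensorProduct.one_def, hKP.comul_g,
    hKP.comul_h, hKP.isGroupLikeElem_gh.comul_eq_tmul_self, hKP.comul_z, hKP.comul_gz,
    hKP.comul_hz, hKP.comul_ghz, hKP.repr_one, hKP.repr_g, hKP.repr_h, hKP.repr_gh, hKP.repr_z,
    hKP.repr_gz, hKP.repr_hz, hKP.repr_ghz, -mul_eq_mul_left_iff, -mul_eq_mul_right_iff]
    at e45 e54 e46 e56 e64 e67
  set c := b.repr u
  have c4 : c 4 = 0 := by linear_combination 2 * c 6 * (e45 - e54) - (e46 - e56)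
  have c5 : c 5 = 0 := by linear_combination c4 - 2 * (e45 - e54)
  have c6 : c 6 = 0 := by linear_combination 2 * c 6 * c4 - 2 * e64
  have c7 : c 7 = 0 := by linear_combination 2 * c 7 * c6 - 2 * e67
  have hspan : ({1, g, h, g * h} : Set H) = b '' {0, 1, 2, 3} := by
    simp [Set.image_insert_eq, hKP.basis_eq]
  rw [hspan, b.mem_span_image]
  intro i hi
  replace hi : c i ≠ 0 := Finsupp.mem_support_iff.mp hi
  fin_cases i <;> simp_all

lemma mem_of_isGroupLikeElem [CharZero k] {u : H} (hu : IsGroupLikeElem k u) :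
    u ∈ ({1, g, h, g * h} : Set H) := by
  have hsub : ({1, g, h, g * h} : Set H) ⊆ {a | IsGroupLikeElem k a} := by
    simp [Set.insert_subset_iff, IsGroupLikeElem.one, hKP.isGroupLikeElem_g_s7,
      hKP.isGroupLikeElem_h_s7, hKP.isGroupLikeElem_gh]
  have hlin := linearIndepOn_isGroupLikeElem (R := k) (A := H)
  exact (hlin.mono hsub).mem_span_iff_id.mp (hKP.mem_span_of_isGroupLikeElem hu)
    (hlin.mono (Set.insert_subset hu hsub))

lemma z_pow_four [CharZero k] : z ^ 4 = 1 := by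
  have hsq : (1 + g + h - g * h) * (1 + g + h - g * h) = (4 : k) • (1 : H) := by
    have hgg : g * (g * h) = h := by rw [← mul_assoc, hKP.g_sq, one_mul]
    have hhg : h * (g * h) = g := by
      rw [← mul_assoc, ← hKP.gh_comm, mul_assoc, hKP.h_sq, mul_one]
    have hghg : g * h * g = h := by
      rw [mul_assoc, ← hKP.gh_comm, ← mul_assoc, hKP.g_sq, one_mul]
    have hghh : g * h * h = g := by rw [mul_assoc, hKP.h_sq, mul_one]
    simp only [mul_add, add_mul, mul_sub, sub_mul, one_mul, mul_one, hKP.g_sq, hKP.h_sq,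
      ← hKP.gh_comm, hgg, hhg, hghg, hghh, hKP.gh_mul_gh]
    rw [show (4 : k) = 1 + 1 + 1 + 1 by norm_num]
    simp only [add_smul, one_smul]
    abel
  rw [show z ^ 4 = z * z * (z * z) by noncomm_ring, hKP.z_sq, smul_mul_smul_comm, hsq,
    smul_smul]
  norm_num

lemma apply_eq_of_rTensor_comul_z_eq_comm [CharZero k] {L : H →ₗ[k] H}
    (hL : L.rTensor H (Coalgebra.comul z) =
      L.rTensor H (TensorProduct.comm k H H (Coalgebra.comul z))) :
    L (g * z) = L z ∧ L (h * z) = L z := by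
  simp only [hKP.comul_z, map_smul, map_add, map_sub, LinearMap.rTensor_tmul, comm_tmul] at hL
  have h5 := congrArg (TensorProduct.rid k H ∘ (b.coord 5).lTensor H) hL
  have h6 := congrArg (TensorProduct.rid k H ∘ (b.coord 6).lTensor H) hL
  simp [hKP.repr_z, hKP.repr_gz, hKP.repr_hz, sub_eq_zero, eq_comm (a := (0 : H))] at h5 h6
  exact ⟨h6.symm, h5.symm⟩

lemma map_comul_z_of_eq [CharZero k] {L : H →ₗ[k] H} (hgz : L (g * z) = L z)
    (hhz : L (h * z) = L z) :
    map L L (Coalgebra.comul z) = L z ⊗ₜ L z := by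
  rw [hKP.comul_z]
  simp only [map_smul, map_add, map_sub, map_tmul, hgz, hhz]
  module

lemma isGroupLikeElem_of_mem {x : H} (hx : x ∈ ({g, h, g * h} : Set H)) :
    IsGroupLikeElem k x := by
  rcases hx with rfl | rfl | rfl
  exacts [hKP.isGroupLikeElem_g_s7, hKP.isGroupLikeElem_h_s7, hKP.isGroupLikeElem_gh]

lemma mul_self_of_mem {x : H} (hx : x ∈ ({g, h, g * h} : Set H)) : x * x = 1 := by
  rcases hx with rfl | rfl | rfl
  exacts [hKP.g_sq, hKP.h_sq, hKP.gh_mul_gh]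

lemma ne_one_of_mem {x : H} (hx : x ∈ ({g, h, g * h} : Set H)) : x ≠ 1 := by
  intro hx1
  have hrepr := congrArg b.repr hx1
  rcases hx with rfl | rfl | rfl <;>
    simp [hKP.repr_one, hKP.repr_g, hKP.repr_h, hKP.repr_gh, Finsupp.single_left_inj] at hrepr

variable {lact ract : H ⊗[k] H →ₗ[k] H} (hmp : IsMatchedPairOfActions lact ract)
include hmp

lemma isGroupLikeElem_lact_z_tmul [CharZero k] {γ : H} (hγ : IsGroupLikeElem k γ)
    (hγγ : γ * γ = 1) :
    IsGroupLikeElem k (lact (z ⊗ₜ γ)) where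
  counit_eq_one := by rw [hmp.left.counit_apply, hKP.counit_z, hγ.counit_eq_one, one_mul]
  comul_eq_tmul_self := by
    obtain ⟨hgz, hhz⟩ := hKP.apply_eq_of_rTensor_comul_z_eq_comm
      (hmp.rTensor_comul_eq_rTensor_comm_comul hγ hγγ z)
    rw [hmp.left.comul_apply_tmul_of_isGroupLikeElem hγ, hKP.map_comul_z_of_eq hgz hhz]
    rfl

lemma isGroupLikeElem_ract_tmul_z [CharZero k] {γ : H} (hγ : IsGroupLikeElem k γ)
    (hγγ : γ * γ = 1) :
    IsGroupLikeElem k (ract (γ ⊗ₜ z)) where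
  counit_eq_one := by rw [hmp.right.counit_apply, hKP.counit_z, hγ.counit_eq_one, one_mul]
  comul_eq_tmul_self := by
    have hL := congrArg (TensorProduct.comm k H H)
      (hmp.lTensor_comul_eq_lTensor_comm_comul hγ hγγ z)
    rw [← LinearMap.rTensor_comm, ← LinearMap.rTensor_comm, comm_comm] at hL
    obtain ⟨hgz, hhz⟩ := hKP.apply_eq_of_rTensor_comul_z_eq_comm hL.symm
    rw [hmp.right.comul_apply_tmul_of_isGroupLikeElem hγ, hKP.map_comul_z_of_eq hgz hhz]
    rfl

end IsKacPaljutkin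

theorem z_acts_grouplike_of_matchedPair_general {k H : Type} [Field k] [CharZero k]
    [Ring H] [HopfAlgebra k H] (g h z : H) (b : Module.Basis (Fin 8) k H)
    (hKP : IsKacPaljutkin k H g h z b)
    (lact ract : H ⊗[k] H →ₗ[k] H) (hmp : IsMatchedPairOfActions lact ract) :
    (∀ x ∈ ({g, h, g * h} : Set H),
      Coalgebra.comul (R := k) (lact (z ⊗ₜ[k] x)) = lact (z ⊗ₜ[k] x) ⊗ₜ[k] lact (z ⊗ₜ[k] x) ∧
      Coalgebra.counit (R := k) (lact (z ⊗ₜ[k] x)) = 1 ∧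
      lact (z ⊗ₜ[k] x) ≠ 1 ∧
      lact (z ⊗ₜ[k] x) ∈ ({g, h, g * h} : Set H)) ∧
    (∀ x ∈ ({g, h, g * h} : Set H), ract (x ⊗ₜ[k] z) ∈ ({g, h, g * h} : Set H)) := by
  refine ⟨fun x hx => ?_, fun x hx => ?_⟩
  · have hgl := hKP.isGroupLikeElem_lact_z_tmul hmp (hKP.isGroupLikeElem_of_mem hx)
      (hKP.mul_self_of_mem hx)
    have hne : lact (z ⊗ₜ x) ≠ 1 := fun h1 => hKP.ne_one_of_mem hx
      (hmp.eq_one_of_left_act_eq_one four_ne_zero hKP.z_pow_four hKP.counit_z h1)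
    exact ⟨hgl.comul_eq_tmul_self, hgl.counit_eq_one, hne,
      (hKP.mem_of_isGroupLikeElem hgl).resolve_left hne⟩
  · have hgl := hKP.isGroupLikeElem_ract_tmul_z hmp (hKP.isGroupLikeElem_of_mem hx)
      (hKP.mul_self_of_mem hx)
    have hne : ract (x ⊗ₜ z) ≠ 1 := fun h1 => hKP.ne_one_of_mem hx
      (hmp.eq_one_of_right_act_eq_one four_ne_zero hKP.z_pow_four hKP.counit_z h1)
    exact (hKP.mem_of_isGroupLikeElem hgl).resolve_left hne

/-- For every matched pair of actions `(⇀, ↼)` on the Kac–Paljutkin algebra `H₈`,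
each of `z ⇀ g`, `z ⇀ h`, `z ⇀ gh` is a group-like element different from `1`, hence
lies in `{g, h, gh}`; likewise each of `g ↼ z`, `h ↼ z`, `gh ↼ z` lies in `{g, h, gh}`. -/
theorem z_acts_grouplike_of_matchedPair {k H : Type} [Field k] [CharZero k] [IsAlgClosed k]
    [Ring H] [HopfAlgebra k H] (g h z : H) (b : Module.Basis (Fin 8) k H)
    (hKP : IsKacPaljutkin k H g h z b)
    (lact ract : H ⊗[k] H →ₗ[k] H) (hmp : IsMatchedPairOfActions lact ract) :
    (∀ x ∈ ({g, h, g * h} : Set H),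
      Coalgebra.comul (R := k) (lact (z ⊗ₜ[k] x)) = lact (z ⊗ₜ[k] x) ⊗ₜ[k] lact (z ⊗ₜ[k] x) ∧
      Coalgebra.counit (R := k) (lact (z ⊗ₜ[k] x)) = 1 ∧
      lact (z ⊗ₜ[k] x) ≠ 1 ∧
      lact (z ⊗ₜ[k] x) ∈ ({g, h, g * h} : Set H)) ∧
    (∀ x ∈ ({g, h, g * h} : Set H), ract (x ⊗ₜ[k] z) ∈ ({g, h, g * h} : Set H)) :=
  z_acts_grouplike_of_matchedPair_general g h z b hKP lact ract hmp
end
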